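/- Let u : V → W be a linear map between finite-dimensional real vector spaces and let f : V → ℤ be a polyhedral function. Then the pushforward u_!(f) : W → ℤ defined by u_!(f)(w) = I(f · 1_{u^{-1}(w)}) is a polyhedral function on W. (Here f · 1_{u^{-1}(w)} is the restriction of f to the fiber of u over w, extended by zero; it is a polyhedral function on V, so the integral is defined.) -/

import Mathlib

/-- A polyhedral cell in a real vector space: a nonempty subset cut out by finitely many
affine-linear equalities and finitely many strict affine-linear inequalities. -/
def IsPolyhedralCell {W : Type*} [AddCommGroup W] [Module ℝ W] (C : Set W) : Prop :=
  C.Nonempty ∧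
    ∃ (p q : ℕ) (f : Fin p → (W →ᵃ[ℝ] ℝ)) (g : Fin q → (W →ᵃ[ℝ] ℝ)),
      C = {x | (∀ i, f i x = 0) ∧ ∀ j, 0 < g j x}

/-- The dimension of a subset of a real vector space: the dimension of its affine span. -/
noncomputable def cellDim {W : Type*} [AddCommGroup W] [Module ℝ W] (C : Set W) : ℕ :=
  Module.finrank ℝ (affineSpan ℝ C).direction

open Classical in
/-- The (integer-valued) indicator function of a set. -/
noncomputable def ind {W : Type*} (C : Set W) : W → ℤ := fun x => if x ∈ C then 1 else 0

/-- The group of polyhedral functions on `W`: the subgroup of the additive group of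
functions `W → ℤ` generated by indicator functions of polyhedral cells. -/
def PolF (W : Type*) [AddCommGroup W] [Module ℝ W] : AddSubgroup (W → ℤ) :=
  AddSubgroup.closure {f | ∃ C : Set W, IsPolyhedralCell C ∧ f = ind C}

theorem ind_mem_PolF {W : Type*} [AddCommGroup W] [Module ℝ W] {C : Set W}
    (hC : IsPolyhedralCell C) : ind C ∈ PolF W :=
  AddSubgroup.subset_closure ⟨C, hC, rfl⟩

/-- `I : PolF W →+ ℤ` is integration against Euler-characteristic measure if it sends
the indicator function of every polyhedral cell `C` to `(-1) ^ dim C`. -/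
def IsEulerHom {W : Type*} [AddCommGroup W] [Module ℝ W] (I : PolF W →+ ℤ) : Prop :=
  ∀ (C : Set W) (hC : IsPolyhedralCell C),
    I ⟨ind C, ind_mem_PolF hC⟩ = (-1) ^ cellDim C

/-!
By additivity in `f` it suffices to treat `f = 1_C` for a cell
`C = {x | ∀ i, f i x = 0, ∀ j, 0 < g j x}`. Every nonempty fibre `C ∩ u⁻¹(w)` is a cell with
the same direction `ker u ∩ ⋂ ker (f i)`, so `u_!(1_C) = ± 1_{u(C)}`, and it remains to see that
`u(C)` is a cell. If `u` is injective on the direction of `C`, it maps `C` affinely onto its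
image. Otherwise pick `e ≠ 0` in `ker u` parallel to `C`: the sweep `C + ℝe` is again a cell by
Fourier–Motzkin elimination of the coordinate along `e`, and slicing it by a hyperplane
transverse to `e` yields a cell with the same image under `u` and a smaller `ker u ∩ direction`.
-/

open Module Filter Topology

section Indicator

variable {X : Type*}

lemma ind_empty : ind (∅ : Set X) = 0 := by
  ext; simp [ind]

lemma ind_mul_ind (C D : Set X) : ind C * ind D = ind (C ∩ D) := by
  classical
  ext x
  by_cases hC : x ∈ C <;> by_cases hD : x ∈ D <;> simp [ind, hC, hD]

end Indicator

section Cells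

variable {V : Type*} [AddCommGroup V] [Module ℝ V] {ι κ ι' κ' : Type*}

def cellSet (f : ι → V →ᵃ[ℝ] ℝ) (g : κ → V →ᵃ[ℝ] ℝ) : Set V :=
  {x | (∀ i, f i x = 0) ∧ ∀ j, 0 < g j x}

def cellDirection (f : ι → V →ᵃ[ℝ] ℝ) : Submodule ℝ V :=
  ⨅ i, LinearMap.ker (f i).linear

@[simp]
lemma mem_cellSet {f : ι → V →ᵃ[ℝ] ℝ} {g : κ → V →ᵃ[ℝ] ℝ} {x : V} :
    x ∈ cellSet f g ↔ (∀ i, f i x = 0) ∧ ∀ j, 0 < g j x :=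
  Iff.rfl

lemma isPolyhedralCell_cellSet [Finite ι] [Finite κ] (f : ι → V →ᵃ[ℝ] ℝ)
    (g : κ → V →ᵃ[ℝ] ℝ) (hne : (cellSet f g).Nonempty) : IsPolyhedralCell (cellSet f g) := by
  refine ⟨hne, Nat.card ι, Nat.card κ, f ∘ (Finite.equivFin ι).symm,
    g ∘ (Finite.equivFin κ).symm, ?_⟩
  ext x
  exact and_congr (Finite.equivFin ι).symm.forall_congr_right.symm
    (Finite.equivFin κ).symm.forall_congr_right.symm

lemma ind_cellSet_mem_PolF [Finite ι] [Finite κ] (f : ι → V →ᵃ[ℝ] ℝ) (g : κ → V →ᵃ[ℝ] ℝ) :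
    ind (cellSet f g) ∈ PolF V := by
  rcases (cellSet f g).eq_empty_or_nonempty with h | h
  · rw [h, ind_empty]
    exact zero_mem _
  · exact ind_mem_PolF (isPolyhedralCell_cellSet f g h)

lemma cellSet_inter_cellSet (f : ι → V →ᵃ[ℝ] ℝ) (g : κ → V →ᵃ[ℝ] ℝ)
    (f' : ι' → V →ᵃ[ℝ] ℝ) (g' : κ' → V →ᵃ[ℝ] ℝ) :
    cellSet f g ∩ cellSet f' g' = cellSet (Sum.elim f f') (Sum.elim g g') := by
  ext x
  simp only [Set.mem_inter_iff, mem_cellSet, Sum.forall, Sum.elim_inl, Sum.elim_inr]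
  tauto

lemma cellDirection_sum_elim (f : ι → V →ᵃ[ℝ] ℝ) (f' : ι' → V →ᵃ[ℝ] ℝ) :
    cellDirection (Sum.elim f f') = cellDirection f ⊓ cellDirection f' :=
  iInf_sum

lemma sub_mem_cellDirection {f : ι → V →ᵃ[ℝ] ℝ} {g : κ → V →ᵃ[ℝ] ℝ} {x y : V}
    (hx : x ∈ cellSet f g) (hy : y ∈ cellSet f g) : x - y ∈ cellDirection f := by
  simp only [cellDirection, Submodule.mem_iInf, LinearMap.mem_ker]
  intro i
  rw [← vsub_eq_sub, AffineMap.linearMap_vsub, hx.1 i, hy.1 i, vsub_self]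

lemma AffineMap.apply_add_smul (F : V →ᵃ[ℝ] ℝ) (x e : V) (t : ℝ) :
    F (x + t • e) = F x + t * F.linear e := by
  rw [add_comm x, ← vadd_eq_add, F.map_vadd, map_smul, smul_eq_mul, vadd_eq_add, add_comm]

/-- A strict inequality survives small moves inside the affine subspace, so the cell is open in it
and spans it. -/
lemma direction_affineSpan_cellSet [Finite κ] {f : ι → V →ᵃ[ℝ] ℝ} {g : κ → V →ᵃ[ℝ] ℝ}
    (hne : (cellSet f g).Nonempty) :
    (affineSpan ℝ (cellSet f g)).direction = cellDirection f := by
  obtain ⟨x₀, hx₀⟩ := hne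
  apply le_antisymm
  · rw [direction_affineSpan, vectorSpan_def, Submodule.span_le]
    rintro _ ⟨x, hx, y, hy, rfl⟩
    exact sub_mem_cellDirection hx hy
  · intro v hv
    have hnear : ∀ᶠ t in 𝓝[≠] (0 : ℝ), ∀ j, 0 < g j x₀ + t * (g j).linear v := by
      refine eventually_all.2 fun j => ?_
      refine Tendsto.eventually_const_lt (hx₀.2 j) ?_ |>.filter_mono nhdsWithin_le_nhds
      exact Continuous.tendsto' (by fun_prop) _ _ (by simp)
    obtain ⟨t, ht, ht0⟩ := (hnear.and self_mem_nhdsWithin).exists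
    have hmem : x₀ + t • v ∈ cellSet f g := by
      refine ⟨fun i => ?_, fun j => ?_⟩
      · simp only [cellDirection, Submodule.mem_iInf, LinearMap.mem_ker] at hv
        rw [AffineMap.apply_add_smul, hv i, hx₀.1 i, mul_zero, add_zero]
      · rw [AffineMap.apply_add_smul]
        exact ht j
    have hsub := AffineSubspace.vsub_mem_direction (subset_affineSpan ℝ _ hmem)
      (subset_affineSpan ℝ _ hx₀)
    rw [vsub_eq_sub, add_sub_cancel_left] at hsub
    simpa [smul_smul, inv_mul_cancel₀ (show t ≠ 0 from ht0)] using
      Submodule.smul_mem _ t⁻¹ hsub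

end Cells

section Coordinates

variable {X W : Type*} [AddCommGroup X] [Module ℝ X] [AddCommGroup W] [Module ℝ W]
  [FiniteDimensional ℝ W]

noncomputable def coordMaps (A : X →ᵃ[ℝ] W) : Fin (finrank ℝ W) → X →ᵃ[ℝ] ℝ :=
  fun k => ((finBasis ℝ W).coord k).toAffineMap.comp A

lemma forall_coordMaps_eq_zero_iff (A : X →ᵃ[ℝ] W) (x : X) :
    (∀ k, coordMaps A k x = 0) ↔ A x = 0 := by
  simp [coordMaps, (finBasis ℝ W).ext_elem_iff (y := 0)]

lemma cellDirection_coordMaps (A : X →ᵃ[ℝ] W) :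
    cellDirection (coordMaps A) = LinearMap.ker A.linear := by
  ext v
  simp [cellDirection, coordMaps, (finBasis ℝ W).ext_elem_iff (y := 0)]

variable (u : X →ₗ[ℝ] W) (w : W)

lemma preimage_singleton_eq_cellSet :
    u ⁻¹' {w} = cellSet (coordMaps (u.toAffineMap - AffineMap.const ℝ X w))
      (isEmptyElim : Empty → X →ᵃ[ℝ] ℝ) := by
  ext x
  simp [forall_coordMaps_eq_zero_iff, sub_eq_zero]

lemma cellDirection_coordMaps_sub_const :
    cellDirection (coordMaps (u.toAffineMap - AffineMap.const ℝ X w)) = LinearMap.ker u := by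
  rw [cellDirection_coordMaps]
  simp

end Coordinates

section FourierMotzkin

variable {κ : Type*}

theorem exists_forall_pos_add_mul_iff [Finite κ] (a b : κ → ℝ) :
    (∃ t : ℝ, ∀ j, 0 < a j + t * b j) ↔
      (∀ j, b j = 0 → 0 < a j) ∧ ∀ j k, 0 < b j → b k < 0 → 0 < b j * a k - b k * a j := by
  constructor
  · rintro ⟨t, ht⟩
    refine ⟨fun j hj => by simpa [hj] using ht j, fun j k hj hk => ?_⟩
    nlinarith [ht j, ht k, mul_pos hj (ht k), mul_pos (neg_pos.2 hk) (ht j)]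
  · rintro ⟨hzero, hpair⟩
    -- `t` must lie above `-a j / b j` for `b j > 0` and below `-a k / b k` for `b k < 0`.
    obtain ⟨t, hlow, hupp⟩ := Set.Finite.exists_between'
      ((Set.toFinite {j | 0 < b j}).image fun j => -a j / b j)
      ((Set.toFinite {k | b k < 0}).image fun k => -a k / b k) (by
        rintro _ ⟨j, hj, rfl⟩ _ ⟨k, hk, rfl⟩
        dsimp only
        rw [div_lt_iff₀ hj, div_mul_eq_mul_div, lt_div_iff_of_neg hk]
        linarith [hpair j k hj hk])
    refine ⟨t, fun j => ?_⟩
    rcases lt_trichotomy (b j) 0 with hj | hj | hj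
    · have := hupp _ ⟨j, hj, rfl⟩
      rw [lt_div_iff_of_neg hj] at this
      linarith
    · simpa [hj] using hzero j hj
    · have := hlow _ ⟨j, hj, rfl⟩
      rw [div_lt_iff₀ hj] at this
      linarith

end FourierMotzkin

section Elimination

variable {V : Type*} [AddCommGroup V] [Module ℝ V] {ι κ : Type*}

/-- The inequalities produced by eliminating the variable `t` from `0 < g j x + t * b j`, in the
form of `exists_forall_pos_add_mul_iff`; pairs that impose nothing are replaced by `0 < 1`. -/
noncomputable def fourierMotzkin (g : κ → V →ᵃ[ℝ] ℝ) (b : κ → ℝ) : κ ⊕ κ × κ → V →ᵃ[ℝ] ℝ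
  | .inl j => if b j = 0 then g j else AffineMap.const ℝ V 1
  | .inr (j, k) => if 0 < b j ∧ b k < 0 then b j • g k - b k • g j else AffineMap.const ℝ V 1

lemma forall_pos_fourierMotzkin_iff (g : κ → V →ᵃ[ℝ] ℝ) (b : κ → ℝ) (x : V) :
    (∀ p, 0 < fourierMotzkin g b p x) ↔
      (∀ j, b j = 0 → 0 < g j x) ∧ ∀ j k, 0 < b j → b k < 0 → 0 < b j * g k x - b k * g j x := by
  refine Sum.forall.trans (and_congr (forall_congr' fun j => ?_) (Prod.forall.trans ?_))
  · by_cases hj : b j = 0 <;> simp [fourierMotzkin, hj]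
  · refine forall₂_congr fun j k => ?_
    by_cases hjk : 0 < b j ∧ b k < 0
    · simp [fourierMotzkin, hjk]
    · simp only [fourierMotzkin, hjk, if_false, AffineMap.const_apply, zero_lt_one, true_iff]
      tauto

lemma sweep_cellSet_eq [Finite κ] (f : ι → V →ᵃ[ℝ] ℝ) (g : κ → V →ᵃ[ℝ] ℝ) {e : V}
    (he : e ∈ cellDirection f) :
    {x | ∃ t : ℝ, x + t • e ∈ cellSet f g} =
      cellSet f (fourierMotzkin g fun j => (g j).linear e) := by
  simp only [cellDirection, Submodule.mem_iInf, LinearMap.mem_ker] at he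
  ext x
  simp only [Set.mem_ofPred_eq, mem_cellSet, AffineMap.apply_add_smul, he, mul_zero, add_zero,
    forall_pos_fourierMotzkin_iff, ← exists_forall_pos_add_mul_iff, exists_and_left]

end Elimination

section Image

variable {V W : Type*} [AddCommGroup V] [Module ℝ V] [AddCommGroup W] [Module ℝ W]
  {ι κ : Type*}

lemma image_eq_image_sweep_inter_ker (u : V →ₗ[ℝ] W) {e : V} (hu : u e = 0)
    {φ : Dual ℝ V} (hφ : φ e = 1) (C : Set V) :
    u '' C = u '' ({x | ∃ t : ℝ, x + t • e ∈ C} ∩ {x | φ x = 0}) := by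
  ext w
  constructor
  · rintro ⟨x, hx, rfl⟩
    exact ⟨x - φ x • e, ⟨⟨φ x, by simpa using hx⟩, by simp [hφ]⟩, by simp [hu]⟩
  · rintro ⟨y, ⟨⟨t, ht⟩, -⟩, rfl⟩
    exact ⟨y + t • e, ht, by simp [hu]⟩

lemma cellSet_inter_ker (f : ι → V →ᵃ[ℝ] ℝ) (g : κ → V →ᵃ[ℝ] ℝ) (φ : Dual ℝ V) :
    cellSet f g ∩ {x | φ x = 0} = cellSet (fun o : Option ι => o.elim φ.toAffineMap f) g := by
  ext x
  simp only [Set.mem_inter_iff, mem_cellSet, Set.mem_ofPred_eq, Option.forall, Option.elim,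
    LinearMap.coe_toAffineMap]
  tauto

lemma cellDirection_option (f : ι → V →ᵃ[ℝ] ℝ) (φ : Dual ℝ V) :
    cellDirection (fun o : Option ι => o.elim φ.toAffineMap f) =
      LinearMap.ker φ ⊓ cellDirection f :=
  iInf_option _

variable [FiniteDimensional ℝ W]

/-- An affine left inverse `R` of `u` on the cell exhibits the image as
`{w | R w ∈ C ∧ u (R w) = w}`. -/
lemma isPolyhedralCell_image_of_inf_eq_bot [Finite ι] [Finite κ] (u : V →ₗ[ℝ] W)
    (f : ι → V →ᵃ[ℝ] ℝ) (g : κ → V →ᵃ[ℝ] ℝ) (hne : (cellSet f g).Nonempty)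
    (hbot : LinearMap.ker u ⊓ cellDirection f = ⊥) :
    IsPolyhedralCell (u '' cellSet f g) := by
  obtain ⟨x₀, hx₀⟩ := hne
  set D := cellDirection f
  obtain ⟨r, hr⟩ := (u ∘ₗ D.subtype).exists_leftInverse_of_injective (by
    rw [LinearMap.ker_comp, ← Submodule.disjoint_iff_comap_eq_bot, disjoint_iff, inf_comm, hbot])
  set L : W →ₗ[ℝ] V := D.subtype ∘ₗ r
  set R : W →ᵃ[ℝ] V := L.toAffineMap + AffineMap.const ℝ W (x₀ - L (u x₀))
  have hR : ∀ x ∈ cellSet f g, R (u x) = x := by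
    intro x hx
    have hL : L (u (x - x₀)) = x - x₀ :=
      congr_arg Subtype.val (LinearMap.congr_fun hr ⟨x - x₀, sub_mem_cellDirection hx hx₀⟩)
    rw [map_sub, map_sub] at hL
    simp only [R, AffineMap.coe_add, Pi.add_apply, LinearMap.coe_toAffineMap,
      AffineMap.const_apply]
    rw [← sub_eq_zero, ← sub_eq_zero.2 hL]
    abel
  have himage : u '' cellSet f g = cellSet
      (Sum.elim (fun i => (f i).comp R) (coordMaps (u.toAffineMap.comp R - AffineMap.id ℝ W)))
      (fun j => (g j).comp R) := by
    ext w
    simp only [Set.mem_image, mem_cellSet, Sum.forall, Sum.elim_inl, Sum.elim_inr,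
      forall_coordMaps_eq_zero_iff, AffineMap.coe_comp, Function.comp_apply, AffineMap.coe_sub,
      Pi.sub_apply, AffineMap.coe_id, id_eq, LinearMap.coe_toAffineMap, sub_eq_zero]
    constructor
    · rintro ⟨x, hx, rfl⟩
      rw [hR x hx]
      exact ⟨⟨hx.1, rfl⟩, hx.2⟩
    · rintro ⟨⟨hf, hu⟩, hg⟩
      exact ⟨R w, ⟨hf, hg⟩, hu⟩
  rw [himage]
  exact isPolyhedralCell_cellSet _ _ (himage ▸ ⟨u x₀, x₀, hx₀, rfl⟩)

theorem isPolyhedralCell_image_cellSet [FiniteDimensional ℝ V] (u : V →ₗ[ℝ] W)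
    {ι κ : Type} [Finite ι] [Finite κ] (f : ι → V →ᵃ[ℝ] ℝ) (g : κ → V →ᵃ[ℝ] ℝ)
    (hne : (cellSet f g).Nonempty) :
    IsPolyhedralCell (u '' cellSet f g) := by
  induction hn : finrank ℝ ↥(LinearMap.ker u ⊓ cellDirection f) using Nat.strong_induction_on
    generalizing ι κ with
  | _ n ih =>
  by_cases hbot : LinearMap.ker u ⊓ cellDirection f = ⊥
  · exact isPolyhedralCell_image_of_inf_eq_bot u f g hne hbot
  obtain ⟨e, ⟨heu, hef⟩, he⟩ := Submodule.exists_mem_ne_zero_of_ne_bot hbot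
  obtain ⟨φ, hφ⟩ := Projective.exists_dual_eq_one ℝ he
  have himage := image_eq_image_sweep_inter_ker u heu hφ (cellSet f g)
  rw [sweep_cellSet_eq f g hef, cellSet_inter_ker] at himage
  rw [himage]
  refine ih _ ?_ _ _ (himage ▸ hne.image u).of_image rfl
  rw [← hn, cellDirection_option]
  refine Submodule.finrank_lt_finrank_of_lt (SetLike.lt_iff_le_and_exists.2
    ⟨inf_le_inf_left _ inf_le_right, e, Submodule.mem_inf.2 ⟨heu, hef⟩, fun h => ?_⟩)
  rw [LinearMap.mem_ker.1 (Submodule.mem_inf.1 (Submodule.mem_inf.1 h).2).1] at hφ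
  exact zero_ne_one hφ

end Image

section Pushforward

variable {V W : Type*} [AddCommGroup V] [Module ℝ V] [AddCommGroup W] [Module ℝ W]
  [FiniteDimensional ℝ W]

lemma mul_ind_cellSet_mem_PolF {ι κ : Type*} [Finite ι] [Finite κ] {h : V → ℤ}
    (hh : h ∈ PolF V) (f : ι → V →ᵃ[ℝ] ℝ) (g : κ → V →ᵃ[ℝ] ℝ) :
    h * ind (cellSet f g) ∈ PolF V := by
  refine (AddSubgroup.closure_le
    (K := (PolF V).comap (AddMonoidHom.mulRight (ind (cellSet f g))))).2 ?_ hh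
  rintro _ ⟨_, ⟨-, p, q, f', g', rfl⟩, rfl⟩
  change ind (cellSet f' g') * ind (cellSet f g) ∈ PolF V
  rw [ind_mul_ind, cellSet_inter_cellSet]
  exact ind_cellSet_mem_PolF _ _

lemma mul_ind_fiber_mem_PolF (u : V →ₗ[ℝ] W) (w : W) {h : V → ℤ} (hh : h ∈ PolF V) :
    h * ind (u ⁻¹' {w}) ∈ PolF V := by
  rw [preimage_singleton_eq_cellSet]
  exact mul_ind_cellSet_mem_PolF hh _ _

noncomputable def restrictFiber (u : V →ₗ[ℝ] W) (w : W) : PolF V →+ PolF V :=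
  ((AddMonoidHom.mulRight (ind (u ⁻¹' {w}))).comp (PolF V).subtype).codRestrict (PolF V)
    fun h => mul_ind_fiber_mem_PolF u w h.2

noncomputable def pushforward (I : PolF V →+ ℤ) (u : V →ₗ[ℝ] W) : PolF V →+ (W → ℤ) :=
  AddMonoidHom.pi fun w => I.comp (restrictFiber u w)

lemma pushforward_ind_cellSet {I : PolF V →+ ℤ} (hI : IsEulerHom I) (u : V →ₗ[ℝ] W)
    {ι κ : Type*} [Finite ι] [Finite κ] (f : ι → V →ᵃ[ℝ] ℝ) (g : κ → V →ᵃ[ℝ] ℝ) :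
    pushforward I u ⟨ind (cellSet f g), ind_cellSet_mem_PolF f g⟩ =
      (-1 : ℤ) ^ finrank ℝ ↥(LinearMap.ker u ⊓ cellDirection f) • ind (u '' cellSet f g) := by
  ext w
  set fiber := cellSet (Sum.elim f (coordMaps (u.toAffineMap - AffineMap.const ℝ V w)))
    (Sum.elim g (isEmptyElim : Empty → V →ᵃ[ℝ] ℝ))
  have hfiber : fiber = cellSet f g ∩ u ⁻¹' {w} := by
    rw [preimage_singleton_eq_cellSet, cellSet_inter_cellSet]
  have hrestrict : restrictFiber u w ⟨ind (cellSet f g), ind_cellSet_mem_PolF f g⟩ =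
      ⟨ind fiber, ind_cellSet_mem_PolF _ _⟩ :=
    Subtype.ext ((ind_mul_ind _ _).trans (congr_arg ind hfiber.symm))
  simp only [pushforward, AddMonoidHom.pi_apply, AddMonoidHom.comp_apply, hrestrict,
    Pi.smul_apply, smul_eq_mul]
  by_cases hw : w ∈ u '' cellSet f g
  · have hne : fiber.Nonempty := by
      obtain ⟨x, hx, rfl⟩ := hw
      exact ⟨x, hfiber ▸ ⟨hx, rfl⟩⟩
    rw [hI fiber (isPolyhedralCell_cellSet _ _ hne), cellDim, direction_affineSpan_cellSet hne,
      cellDirection_sum_elim, cellDirection_coordMaps_sub_const, inf_comm]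
    simp [ind, hw]
  · have hempty : fiber = ∅ := by
      rw [hfiber, Set.eq_empty_iff_forall_notMem]
      exact fun x hx => hw ⟨x, hx⟩
    have hzero : (⟨ind fiber, ind_cellSet_mem_PolF _ _⟩ : PolF V) = 0 :=
      Subtype.ext (show ind fiber = 0 by rw [hempty, ind_empty])
    simp [hzero, ind, hw]

lemma pushforward_mem_PolF [FiniteDimensional ℝ V] {I : PolF V →+ ℤ} (hI : IsEulerHom I)
    (u : V →ₗ[ℝ] W) (h : PolF V) : pushforward I u h ∈ PolF W := by
  suffices ⊤ ≤ (PolF W).comap (pushforward I u) from this trivial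
  refine AddSubgroup.closure_closure_coe_preimage.ge.trans ((AddSubgroup.closure_le _).2 ?_)
  rintro ⟨_, _⟩ ⟨_, ⟨hne, p, q, f, g, rfl⟩, rfl⟩
  change pushforward I u ⟨ind (cellSet f g), ind_cellSet_mem_PolF f g⟩ ∈ PolF W
  rw [pushforward_ind_cellSet hI]
  exact zsmul_mem (ind_mem_PolF (isPolyhedralCell_image_cellSet u f g hne)) _

end Pushforward

/-- Pushforward of polyhedral functions along a linear map: if
`u : V → W` is linear and `f ∈ PolF V`, then `w ↦ I(f · 1_{u⁻¹(w)})` is a polyhedral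
function on `W`. -/
theorem statement8 (V W : Type*) [AddCommGroup V] [Module ℝ V] [FiniteDimensional ℝ V]
    [AddCommGroup W] [Module ℝ W] [FiniteDimensional ℝ W]
    (I : PolF V →+ ℤ) (hI : IsEulerHom I)
    (u : V →ₗ[ℝ] W) (f : V → ℤ) (hf : f ∈ PolF V) :
    ∃ hfib : ∀ w : W, (fun x => f x * ind (u ⁻¹' {w}) x) ∈ PolF V,
      (fun w : W => I ⟨fun x => f x * ind (u ⁻¹' {w}) x, hfib w⟩) ∈ PolF W :=
  ⟨fun w => mul_ind_fiber_mem_PolF u w hf, pushforward_mem_PolF hI u ⟨f, hf⟩⟩
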